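/- Let 𝒢* be an AMP essential graph with strong-equivalence classes Σ, and let the reduced graph over Σ have an arrow α→β iff some a∈α, b∈β has a→b in 𝒢*, and a line α−β iff some a∈α, b∈β has a (necessarily weak) line a−b in 𝒢*. Then the reduced graph of 𝒢* contains no flags (no induced subgraph α→β−γ with α,γ nonadjacent) and no chordless undirected cycles of length ≥ 4. -/

import Mathlib

/-- A mixed graph: directed edges (arrows) and undirected edges (lines),
no loops, at most one edge between any two vertices. -/
structure MixedGraph (V : Type) where
  arrow : V → V → Prop
  line : V → V → Prop
  line_symm : ∀ a b, line a b → line b a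
  arrow_irrefl : ∀ a, ¬ arrow a a
  line_irrefl : ∀ a, ¬ line a a
  not_arrow_line : ∀ a b, arrow a b → ¬ line a b
  not_arrow_arrow : ∀ a b, arrow a b → ¬ arrow b a

namespace MixedGraph

variable {V : Type}

/-- `a` and `b` are adjacent (joined by some edge). -/
def adj (G : MixedGraph V) (a b : V) : Prop := G.arrow a b ∨ G.arrow b a ∨ G.line a b

/-- A step of a semi-directed path: a forward arrow or a line. -/
def step (G : MixedGraph V) (a b : V) : Prop := G.arrow a b ∨ G.line a b

/-- A semi-directed cycle of length `k ≥ 3`: `v 0, …, v k` with `v k = v 0`,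
each step an arrow or a line, at least one arrow, vertices distinct. -/
def IsSemiDirectedCycle (G : MixedGraph V) (k : ℕ) (v : ℕ → V) : Prop :=
  3 ≤ k ∧ v k = v 0 ∧ (∀ i, i < k → G.step (v i) (v (i + 1))) ∧
    (∃ i, i < k ∧ G.arrow (v i) (v (i + 1))) ∧
    (∀ i j, i < j → j < k → v i ≠ v j)

/-- A chain graph is a mixed graph with no semi-directed cycle. -/
def IsChainGraph (G : MixedGraph V) : Prop := ∀ k v, ¬ G.IsSemiDirectedCycle k v

/-- A triplex `({a,c}, b)`: `a, c` nonadjacent and the induced subgraph on `{a,b,c}`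
is `a→b←c`, `a→b−c`, or `a−b←c`. -/
def triplex (G : MixedGraph V) (a b c : V) : Prop :=
  a ≠ c ∧ ¬ G.adj a c ∧
    ((G.arrow a b ∧ G.arrow c b) ∨ (G.arrow a b ∧ G.line b c) ∨ (G.line a b ∧ G.arrow c b))

def sameSkeleton (G H : MixedGraph V) : Prop := ∀ a b, G.adj a b ↔ H.adj a b

def sameTriplexes (G H : MixedGraph V) : Prop := ∀ a b c, G.triplex a b c ↔ H.triplex a b c

end MixedGraph

/-- The AMP Markov equivalence class of a chain graph `G0`: all chain graphs with the
same skeleton and the same triplexes as `G0`. -/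
def AMPClass {V : Type} (G0 : MixedGraph V) : Set (MixedGraph V) :=
  {G | G.IsChainGraph ∧ G.sameSkeleton G0 ∧ G.sameTriplexes G0}

/-- `E` is the AMP essential graph of the class of `G0`: same skeleton; `a→b` is an arrow
of `E` iff it occurs in some member and its reversal in none; all other edges are lines. -/
def IsEssentialGraph {V : Type} (G0 E : MixedGraph V) : Prop :=
  E.sameSkeleton G0 ∧
    (∀ a b, E.arrow a b ↔
      (∃ G ∈ AMPClass G0, G.arrow a b) ∧ ∀ G ∈ AMPClass G0, ¬ G.arrow b a) ∧
    (∀ a b, E.line a b ↔ G0.adj a b ∧ ¬ E.arrow a b ∧ ¬ E.arrow b a)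

/-- A line of the essential graph is strong if it occurs as a line in every member. -/
def StrongLine {V : Type} (G0 E : MixedGraph V) (a b : V) : Prop :=
  E.line a b ∧ ∀ G ∈ AMPClass G0, G.line a b

/-- A line of the essential graph is weak if both orientations occur among members. -/
def WeakLine {V : Type} (G0 E : MixedGraph V) (a b : V) : Prop :=
  E.line a b ∧ (∃ G ∈ AMPClass G0, G.arrow a b) ∧ (∃ G ∈ AMPClass G0, G.arrow b a)

/-- An arrow of the essential graph is strong if it occurs as an arrow in every member. -/
def StrongArrow {V : Type} (G0 E : MixedGraph V) (a b : V) : Prop :=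
  E.arrow a b ∧ ∀ G ∈ AMPClass G0, G.arrow a b

/-- Two vertices are strongly equivalent if joined by a path of strong lines. -/
def StronglyEquiv {V : Type} (G0 E : MixedGraph V) (x y : V) : Prop :=
  Relation.ReflTransGen (StrongLine G0 E) x y

/-- Arrow between strong-equivalence classes of the reduced graph: the class of `x`
points to the class of `y` iff some representatives are joined by an arrow of `E`. -/
def RArrow {V : Type} (G0 E : MixedGraph V) (x y : V) : Prop :=
  ∃ a b, StronglyEquiv G0 E x a ∧ StronglyEquiv G0 E y b ∧ E.arrow a b

/-- Line between distinct strong-equivalence classes of the reduced graph: some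
representatives are joined by a (necessarily weak) line of `E`. -/
def RLine {V : Type} (G0 E : MixedGraph V) (x y : V) : Prop :=
  ¬ StronglyEquiv G0 E x y ∧
    ∃ a b, StronglyEquiv G0 E x a ∧ StronglyEquiv G0 E y b ∧ E.line a b

/-- Adjacency of strong-equivalence classes in the reduced graph. -/
def RAdj {V : Type} (G0 E : MixedGraph V) (x y : V) : Prop :=
  RArrow G0 E x y ∨ RArrow G0 E y x ∨ RLine G0 E x y

/-!
The key observation is that an arrow `x → y` in a member `G` propagates along any edge
`y ⋯ z` with `x, z` nonadjacent, as soon as some other member has `y → x`: otherwise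
`({x, z}, y)` would be a triplex of `G` but not of that other member. Along a strong line
this forces every weak line at one end to reappear as a line at the other end, so the
reduced graph is read off from arbitrary representatives. A flag `α → β − γ` would then
propagate into the forbidden reversal of `α → β`, and a chordless cycle of weak lines
would propagate one orientation of its first edge into a directed cycle of a member.
-/

theorem Nat.add_mod_ne_add_mod {n r a b : ℕ} (hab : a < b) (hb : b < n) :
    (r + a) % n ≠ (r + b) % n := fun h =>
  hab.ne (by simpa [Nat.ModEq, Nat.mod_eq_of_lt (hab.trans hb), Nat.mod_eq_of_lt hb] using
    Nat.ModEq.add_left_cancel' r h)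

namespace MixedGraph

variable {V : Type} {G : MixedGraph V} {a b c : V}

theorem adj_comm : G.adj a b ↔ G.adj b a := by
  have key : ∀ {a b}, G.adj a b → G.adj b a := by
    rintro a b (h | h | h)
    exacts [Or.inr (Or.inl h), Or.inl h, Or.inr (Or.inr (G.line_symm _ _ h))]
  exact ⟨key, key⟩

theorem ne_of_step (h : G.step a b) : a ≠ b := by
  rintro rfl
  exact h.elim (G.arrow_irrefl a) (G.line_irrefl a)

theorem not_triplex_of_arrow (h : G.arrow b a) : ¬ G.triplex a b c := by
  rintro ⟨-, -, ⟨hab, -⟩ | ⟨hab, -⟩ | ⟨hab, -⟩⟩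
  · exact G.not_arrow_arrow b a h hab
  · exact G.not_arrow_arrow b a h hab
  · exact G.not_arrow_line b a h (G.line_symm a b hab)

theorem IsChainGraph.not_triangle (hG : G.IsChainGraph) (hab : G.arrow a b)
    (hbc : G.step b c) (hca : G.step c a) : False := by
  have hab' : a ≠ b := ne_of_step (Or.inl hab)
  have hbc' := ne_of_step hbc
  have hca' := ne_of_step hca
  apply hG 3 (fun i => if i = 1 then b else if i = 2 then c else a)
  refine ⟨le_rfl, rfl, fun i hi => ?_, ⟨0, by norm_num, by simpa using hab⟩, ?_⟩
  · interval_cases i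
    exacts [Or.inl hab, hbc, hca]
  · intro i j hij hj
    interval_cases j <;> interval_cases i <;> simp [hab', hbc', hca'.symm]

end MixedGraph

section EssentialGraph

variable {V : Type} {G0 E G G' : MixedGraph V} {a b c x y z : V}

theorem StronglyEquiv.symm (h : StronglyEquiv G0 E a b) : StronglyEquiv G0 E b a := by
  induction h with
  | refl => exact .refl
  | tail _ hstep ih =>
    exact .head ⟨E.line_symm _ _ hstep.1, fun G hG => G.line_symm _ _ (hstep.2 G hG)⟩ ih

theorem StronglyEquiv.trans (hab : StronglyEquiv G0 E a b) (hbc : StronglyEquiv G0 E b c) :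
    StronglyEquiv G0 E a c :=
  Relation.ReflTransGen.trans hab hbc

theorem rAdj_of_adj (hxa : StronglyEquiv G0 E x a) (hyb : StronglyEquiv G0 E y b)
    (hab : E.adj a b) (hne : ¬ StronglyEquiv G0 E x y) : RAdj G0 E x y := by
  rcases hab with h | h | h
  · exact Or.inl ⟨a, b, hxa, hyb, h⟩
  · exact Or.inr (Or.inl ⟨b, a, hyb, hxa, h⟩)
  · exact Or.inr (Or.inr ⟨hne, a, b, hxa, hyb, h⟩)

theorem AMPClass.arrow_propagate (hG : G ∈ AMPClass G0) (hG' : G' ∈ AMPClass G0)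
    (hxy : G.arrow x y) (hyx : G'.arrow y x) (hyz : G.adj y z) (hxz : x ≠ z)
    (hnadj : ¬ G.adj x z) : G.arrow y z := by
  have hno : ¬ G.triplex x y z := fun ht =>
    MixedGraph.not_triplex_of_arrow hyx ((hG.2.2 x y z).trans (hG'.2.2 x y z).symm |>.1 ht)
  rcases hyz with h | h | h
  · exact h
  · exact absurd ⟨hxz, hnadj, Or.inl ⟨hxy, h⟩⟩ hno
  · exact absurd ⟨hxz, hnadj, Or.inr (Or.inl ⟨hxy, h⟩)⟩ hno

namespace IsEssentialGraph

variable (hE : IsEssentialGraph G0 E)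
include hE

theorem adj_iff (hG : G ∈ AMPClass G0) : G.adj a b ↔ E.adj a b := by
  rw [hG.2.1 a b, hE.1 a b]

theorem step_of_arrow (hG : G ∈ AMPClass G0) (hab : E.arrow a b) : G.step a b := by
  rcases (hE.adj_iff hG).2 (Or.inl hab) with h | h | h
  · exact Or.inl h
  · exact absurd h (((hE.2.1 a b).1 hab).2 G hG)
  · exact Or.inr h

theorem exists_reverse_arrow (hG : G ∈ AMPClass G0) (hab : G.arrow a b) (hEab : ¬ E.arrow a b) :
    ∃ G' ∈ AMPClass G0, G'.arrow b a := by
  by_contra! h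
  exact hEab ((hE.2.1 a b).2 ⟨⟨G, hG, hab⟩, h⟩)

theorem weakLine_of_line (hab : E.line a b) (hne : ¬ StronglyEquiv G0 E a b) :
    WeakLine G0 E a b := by
  obtain ⟨G, hG, hGab⟩ : ∃ G ∈ AMPClass G0, ¬ G.line a b := by
    by_contra! h
    exact hne (.single ⟨hab, h⟩)
  have hEab : ¬ E.arrow a b := fun h => E.not_arrow_line a b h hab
  have hEba : ¬ E.arrow b a := fun h => E.not_arrow_line b a h (E.line_symm a b hab)
  rcases (hE.adj_iff hG).2 (Or.inr (Or.inr hab)) with h | h | h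
  · exact ⟨hab, ⟨G, hG, h⟩, hE.exists_reverse_arrow hG h hEab⟩
  · exact ⟨hab, hE.exists_reverse_arrow hG h hEba, ⟨G, hG, h⟩⟩
  · exact absurd h hGab

theorem arrow_propagate (hG : G ∈ AMPClass G0) (hG' : G' ∈ AMPClass G0)
    (hxy : G.arrow x y) (hyx : G'.arrow y x) (hyz : E.adj y z) (hxz : x ≠ z)
    (hnadj : ¬ E.adj x z) : G.arrow y z :=
  AMPClass.arrow_propagate hG hG' hxy hyx ((hE.adj_iff hG).2 hyz) hxz
    (fun h => hnadj ((hE.adj_iff hG).1 h))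

theorem line_of_weakLine_of_strongLine (hac : WeakLine G0 E a c) (hab : StrongLine G0 E a b)
    (hcb : c ≠ b) : E.line b c := by
  obtain ⟨-, ⟨G1, hG1, hG1ac⟩, ⟨G2, hG2, hG2ca⟩⟩ := hac
  have hbc : E.adj c b := by
    by_contra hna
    have := hE.arrow_propagate hG2 hG1 hG2ca hG1ac (Or.inr (Or.inr hab.1)) hcb hna
    exact G2.not_arrow_line a b this (hab.2 G2 hG2)
  -- either orientation of `b ⋯ c` closes a semi-directed triangle with `a`
  rcases hbc with h | h | h
  · exact (hG1.1.not_triangle hG1ac (hE.step_of_arrow hG1 h)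
      (Or.inr (G1.line_symm _ _ (hab.2 G1 hG1)))).elim
  · exact (hG2.1.not_triangle hG2ca (Or.inr (hab.2 G2 hG2)) (hE.step_of_arrow hG2 h)).elim
  · exact E.line_symm c b h

theorem line_of_stronglyEquiv_left (hac : E.line a c) (hne : ¬ StronglyEquiv G0 E a c)
    (hab : StronglyEquiv G0 E a b) : E.line b c := by
  induction hab with
  | refl => exact hac
  | @tail b b' hab hbb' ih =>
    have hbc : ¬ StronglyEquiv G0 E b c := fun h => hne (hab.trans h)
    have hcb' : c ≠ b' := by
      rintro rfl
      exact hne (hab.tail hbb')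
    exact hE.line_of_weakLine_of_strongLine (hE.weakLine_of_line ih hbc) hbb' hcb'

theorem line_of_rLine (hxy : RLine G0 E x y) (hxa : StronglyEquiv G0 E x a)
    (hyb : StronglyEquiv G0 E y b) : E.line a b := by
  obtain ⟨hne, a', b', hxa', hyb', hl⟩ := hxy
  have hne' : ∀ {p q}, StronglyEquiv G0 E x p → StronglyEquiv G0 E y q →
      ¬ StronglyEquiv G0 E p q := fun hp hq h => hne (hp.trans (h.trans hq.symm))
  have hab' : E.line a b' :=
    hE.line_of_stronglyEquiv_left hl (hne' hxa' hyb') (hxa'.symm.trans hxa)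
  exact E.line_symm _ _ (hE.line_of_stronglyEquiv_left (E.line_symm _ _ hab')
    (fun h => hne' hxa hyb' h.symm) (hyb'.symm.trans hyb))

theorem not_flag (hab : E.arrow a b) (hbc : WeakLine G0 E b c) (hac : a ≠ c)
    (hnadj : ¬ E.adj a c) : False := by
  obtain ⟨-, ⟨G1, hG1, hG1bc⟩, ⟨G2, hG2, hG2cb⟩⟩ := hbc
  have hba := hE.arrow_propagate hG2 hG1 hG2cb hG1bc (Or.inr (Or.inl hab)) hac.symm
    (fun h => hnadj (MixedGraph.adj_comm.1 h))
  exact ((hE.2.1 a b).1 hab).2 G2 hG2 hba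

theorem not_chordless_weak_cycle {n : ℕ} (hn : 3 ≤ n) {u : ℕ → V}
    (hper : ∀ i, u (i + n) = u i) (hweak : ∀ i, WeakLine G0 E (u i) (u (i + 1)))
    (hne : ∀ i, u i ≠ u (i + 2)) (hnadj : ∀ i, ¬ E.adj (u i) (u (i + 2)))
    (hinj : ∀ i j, i < j → j < n → u i ≠ u j) : False := by
  obtain ⟨G, hG, h0⟩ := (hweak 0).2.1
  have harrow : ∀ i, G.arrow (u i) (u (i + 1)) := by
    intro i
    induction i with
    | zero => exact h0
    | succ i ih =>
      obtain ⟨G', hG', hrev⟩ := (hweak i).2.2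
      exact hE.arrow_propagate hG hG' ih hrev (Or.inr (Or.inr (hweak (i + 1)).1)) (hne i)
        (hnadj i)
  exact hG.1 n u ⟨hn, by simpa using hper 0, fun i _ => Or.inl (harrow i),
    ⟨0, by omega, harrow 0⟩, hinj⟩

theorem not_reduced_flag (hxy : RArrow G0 E x y) (hyz : RLine G0 E y z)
    (hxz : ¬ StronglyEquiv G0 E x z) (hnadj : ¬ RAdj G0 E x z) : False := by
  obtain ⟨a, b, hxa, hyb, hab⟩ := hxy
  have hbz : E.line b z := hE.line_of_rLine hyz hyb .refl
  have hne : ¬ StronglyEquiv G0 E b z := fun h => hyz.1 (hyb.trans h)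
  refine hE.not_flag hab (hE.weakLine_of_line hbz hne) ?_
    (fun h => hnadj (rAdj_of_adj hxa .refl h hxz))
  rintro rfl
  exact hxz hxa

theorem not_reduced_chordless_cycle {n : ℕ} (hn : 4 ≤ n) {v : ℕ → V}
    (hdist : ∀ i, i < n → ∀ j, j < n → i ≠ j → ¬ StronglyEquiv G0 E (v i) (v j))
    (hline : ∀ i, i < n → RLine G0 E (v i) (v ((i + 1) % n)))
    (hchord : ∀ i, i < n → ∀ j, j < n → i ≠ j → (i + 1) % n ≠ j → (j + 1) % n ≠ i →
      ¬ RAdj G0 E (v i) (v j)) : False := by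
  have hlt : ∀ i, i % n < n := fun i => Nat.mod_lt i (by omega)
  have hmod : ∀ i a b, a < b → b < n → (i + a) % n ≠ (i + b) % n := fun _ _ _ =>
    Nat.add_mod_ne_add_mod
  have hdist' : ∀ i a b, a < b → b < n →
      ¬ StronglyEquiv G0 E (v ((i + a) % n)) (v ((i + b) % n)) := fun i a b hab hb =>
    hdist _ (hlt _) _ (hlt _) (hmod i a b hab hb)
  refine hE.not_chordless_weak_cycle (by omega : 3 ≤ n) (u := fun i => v (i % n))
    (fun i => by simp) (fun i => ?_) (fun i h => ?_) (fun i h => ?_) (fun i j hij hj h => ?_)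
  · have h := Nat.mod_add_mod i n 1 ▸ hline (i % n) (hlt i)
    exact hE.weakLine_of_line (hE.line_of_rLine h .refl .refl) h.1
  · exact hdist' i 0 2 (by omega) (by omega) (by simpa using h ▸ .refl)
  · refine hchord _ (hlt i) _ (hlt (i + 2)) (by simpa using hmod i 0 2 (by omega) (by omega))
      ?_ ?_ (rAdj_of_adj .refl .refl h (by simpa using hdist' i 0 2 (by omega) (by omega)))
    · rw [Nat.mod_add_mod]
      exact hmod i 1 2 (by omega) (by omega)
    · rw [Nat.mod_add_mod, add_assoc]
      simpa using (hmod i 0 3 (by omega) (by omega)).symm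
  · simp only [Nat.mod_eq_of_lt (hij.trans hj), Nat.mod_eq_of_lt hj] at h
    exact hdist i (hij.trans hj) j hj hij.ne (h ▸ .refl)

end IsEssentialGraph

end EssentialGraph

theorem stmt11_general {V : Type} (G0 E : MixedGraph V)
    (hE : IsEssentialGraph G0 E) :
    (¬ ∃ x y z : V, ¬ StronglyEquiv G0 E x y ∧ ¬ StronglyEquiv G0 E y z ∧
      ¬ StronglyEquiv G0 E x z ∧ RArrow G0 E x y ∧ RLine G0 E y z ∧ ¬ RAdj G0 E x z) ∧
    (¬ ∃ (n : ℕ) (v : ℕ → V), 4 ≤ n ∧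
      (∀ i, i < n → ∀ j, j < n → i ≠ j → ¬ StronglyEquiv G0 E (v i) (v j)) ∧
      (∀ i, i < n → RLine G0 E (v i) (v ((i + 1) % n))) ∧
      (∀ i, i < n → ∀ j, j < n → i ≠ j → (i + 1) % n ≠ j → (j + 1) % n ≠ i →
        ¬ RAdj G0 E (v i) (v j))) :=
  ⟨fun ⟨_, _, _, _, _, hxz, hxy, hyz, hnadj⟩ => hE.not_reduced_flag hxy hyz hxz hnadj,
    fun ⟨_, _, hn, hdist, hline, hchord⟩ =>
      hE.not_reduced_chordless_cycle hn hdist hline hchord⟩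

/-- Lemma 3.9(a): the reduced graph of the essential graph over strong-equivalence
classes has no flags and no chordless undirected cycles of length ≥ 4. -/
theorem stmt11 {V : Type} (G0 E : MixedGraph V) (h0 : G0.IsChainGraph)
    (hE : IsEssentialGraph G0 E) :
    (¬ ∃ x y z : V, ¬ StronglyEquiv G0 E x y ∧ ¬ StronglyEquiv G0 E y z ∧
      ¬ StronglyEquiv G0 E x z ∧ RArrow G0 E x y ∧ RLine G0 E y z ∧ ¬ RAdj G0 E x z) ∧
    (¬ ∃ (n : ℕ) (v : ℕ → V), 4 ≤ n ∧
      (∀ i, i < n → ∀ j, j < n → i ≠ j → ¬ StronglyEquiv G0 E (v i) (v j)) ∧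
      (∀ i, i < n → RLine G0 E (v i) (v ((i + 1) % n))) ∧
      (∀ i, i < n → ∀ j, j < n → i ≠ j → (i + 1) % n ≠ j → (j + 1) % n ≠ i →
        ¬ RAdj G0 E (v i) (v j))) :=
  stmt11_general G0 E hE
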